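/- arXiv:1403.4654 — 2 statements merged into one kernel-verified Lean document; each statement's English description precedes it below -/
import Mathlib

section
/- For any C > 0, the function v_C(a,t) = a/C + (t/C)(4π − 1/C)(1 − exp(−C a / t)) satisfies the PDE v_t = v·v'' − (v')² + 4π·v' for all a > 0, t > 0, where primes denote partial derivatives in a. -/
open Real

/-! Writing `K = 4π − 1/C` and `e = exp (−C a / t)`, one has `∂ₐv = 1/C + K e`,
`∂ₐ²v = −(C/t) K e` and `∂ₜv = (K/C)(1 − e) − (K a / t) e`; substituting these, and
`4π = K + 1/C`, both sides of the equation reduce to `K/C − (K/C) e − (K a / t) e`. -/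

section

variable (C K t : ℝ)

lemma hasDerivAt_exp_neg_mul_div (x : ℝ) :
    HasDerivAt (fun x => exp (-C * x / t)) (-(C / t) * exp (-C * x / t)) x := by
  have h : HasDerivAt (fun x : ℝ => -C * x / t) (-(C / t)) x := by
    simpa [neg_div] using ((hasDerivAt_id x).const_mul (-C)).div_const t
  simpa [mul_comm] using h.exp

lemma deriv_div_add_mul_one_sub_exp (hC : C ≠ 0) (ht : t ≠ 0) :
    deriv (fun x => x / C + t / C * K * (1 - exp (-C * x / t)))
      = fun x => 1 / C + K * exp (-C * x / t) := by
  funext x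
  have h : HasDerivAt (fun x => x / C + t / C * K * (1 - exp (-C * x / t)))
      (1 / C + t / C * K * (0 - -(C / t) * exp (-C * x / t))) x :=
    ((hasDerivAt_id x).div_const C).add
      (((hasDerivAt_const x 1).sub (hasDerivAt_exp_neg_mul_div C t x)).const_mul (t / C * K))
  rw [h.deriv]
  field_simp
  ring

lemma deriv_const_add_mul_exp_neg_mul_div (a : ℝ) :
    deriv (fun x => 1 / C + K * exp (-C * x / t)) a = -(C / t) * K * exp (-C * a / t) := by
  have h : HasDerivAt (fun x => 1 / C + K * exp (-C * x / t))
      (0 + K * (-(C / t) * exp (-C * a / t))) a :=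
    (hasDerivAt_const a (1 / C)).add ((hasDerivAt_exp_neg_mul_div C t a).const_mul K)
  rw [h.deriv]
  ring

lemma hasDerivAt_mul_one_sub_exp_neg_div (a : ℝ) (hC : C ≠ 0) (ht : t ≠ 0) :
    HasDerivAt (fun s => a / C + s / C * K * (1 - exp (-C * a / s)))
      (K / C * (1 - exp (-C * a / t)) - K * a / t * exp (-C * a / t)) t := by
  have hinner : HasDerivAt (fun s => -C * a / s) (C * a / t ^ 2) t := by
    refine ((hasDerivAt_const t (-C * a)).div (hasDerivAt_id t) ht).congr_deriv ?_
    simp only [id]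
    ring
  have h : HasDerivAt (fun s => a / C + s / C * K * (1 - exp (-C * a / s)))
      (0 + (1 / C * K * (1 - exp (-C * a / t))
        + t / C * K * (0 - exp (-C * a / t) * (C * a / t ^ 2)))) t :=
    (hasDerivAt_const t (a / C)).add
      ((((hasDerivAt_id t).div_const C).mul_const K).mul ((hasDerivAt_const t 1).sub hinner.exp))
  convert h using 1
  field_simp
  ring

end

/-- The function v_C(a,t) = a/C + (t/C)(4π − 1/C)(1 − exp(−Ca/t)) satisfies
v_t = v v'' − (v')² + 4π v' for a > 0, t > 0 (primes are ∂_a). -/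
theorem vC_solves_pde (C : ℝ) (hC : 0 < C)
    (v : ℝ → ℝ → ℝ)
    (hv : v = fun a t => a / C + (t / C) * (4 * π - 1 / C) * (1 - exp (-C * a / t))) :
    ∀ a t : ℝ, 0 < a → 0 < t →
      deriv (fun s => v a s) t
        = v a t * deriv (deriv (fun x => v x t)) a
          - (deriv (fun x => v x t) a) ^ 2
          + 4 * π * deriv (fun x => v x t) a := by
  intro a t _ ht
  subst hv
  set K := 4 * π - 1 / C with hK
  have hπ : 4 * π = K + 1 / C := by rw [hK]; ring
  rw [(hasDerivAt_mul_one_sub_exp_neg_div C K t a hC.ne' ht.ne').deriv,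
    deriv_div_add_mul_one_sub_exp C K t hC.ne' ht.ne', deriv_const_add_mul_exp_neg_mul_div, hπ]
  field_simp
  ring
end

section
/- Let C̃(t) = (C₀ − C_crit)·sqrt(b₀)·e^{2(1−g)t}·[((1/b₀) + 1/(1−g))e^{4(1−g)t} − 1/(1−g)]^{−1/2}. Then C̃ satisfies (d/dt) ln C̃(t) = −2b(t), where b(t) = [((1/b₀)+1/(1−g))e^{4(1−g)t} − 1/(1−g)]^{−1}. Moreover, for C(t) = C̃(t) + C_crit with C_crit > 0, one has (d/dt) ln C(t) > −2b(t) for all t ≥ 0. -/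
open Real

/-!
Write `m = 1 - g` and `E = 1/b = (1/b₀ + 1/m) e^{4mt} - 1/m`, so that `E' = 4mE + 4`. Then
`C̃ = c e^{2mt} E^{-1/2}` satisfies `C̃'/C̃ = 2m - (4mE + 4)/(2E) = -2/E = -2b`.
For `C = C̃ + C_crit` this gives `(ln C)' = -2b · C̃/(C̃ + C_crit) > -2b`, as `b`, `C̃` and
`C_crit` are positive.
Positivity of `E` on `t ≥ 0` holds whatever the sign of `m`: `E = e^{4mt}/b₀ + (e^{4mt} - 1)/m`.
-/

lemma exp_mul_sub_one_div_nonneg (m : ℝ) {t : ℝ} (ht : 0 ≤ t) :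
    0 ≤ (exp (m * t) - 1) / m := by
  rcases lt_trichotomy m 0 with hm | rfl | hm
  · have : exp (m * t) ≤ 1 := exp_le_one_iff.2 (mul_nonpos_of_nonpos_of_nonneg hm.le ht)
    exact div_nonneg_of_nonpos (by linarith) hm.le
  · simp
  · have : 1 ≤ exp (m * t) := one_le_exp (mul_nonneg hm.le ht)
    exact div_nonneg (by linarith) hm.le

lemma add_div_mul_exp_sub_div_pos {b₀ : ℝ} (hb₀ : 0 < b₀) (m : ℝ) {t : ℝ} (ht : 0 ≤ t) :
    0 < (1 / b₀ + 1 / m) * exp (4 * m * t) - 1 / m := by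
  have hlin : 0 ≤ (exp (m * (4 * t)) - 1) / m := exp_mul_sub_one_div_nonneg m (by linarith)
  have hexp : 0 < exp (4 * m * t) / b₀ := by positivity
  calc 0 < exp (4 * m * t) / b₀ + (exp (m * (4 * t)) - 1) / m := by linarith
    _ = _ := by ring_nf

lemma hasDerivAt_mul_exp_sub_div {m : ℝ} (hm : m ≠ 0) (K t : ℝ) :
    HasDerivAt (fun s => K * exp (4 * m * s) - 1 / m)
      (4 * m * (K * exp (4 * m * t) - 1 / m) + 4) t := by
  have hlin : HasDerivAt (fun s : ℝ => 4 * m * s) (4 * m) t := by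
    simpa using (hasDerivAt_id t).const_mul (4 * m)
  refine ((hlin.exp.const_mul K).sub_const (1 / m)).congr_deriv ?_
  field_simp
  ring

lemma hasDerivAt_mul_exp_mul_rpow_neg_half {E : ℝ → ℝ} {m t : ℝ} (c : ℝ)
    (hE : HasDerivAt E (4 * m * E t + 4) t) (hEt : 0 < E t) :
    HasDerivAt (fun s => c * exp (2 * m * s) * E s ^ (-(1:ℝ)/2))
      (-2 * (E t)⁻¹ * (c * exp (2 * m * t) * E t ^ (-(1:ℝ)/2))) t := by
  have hlin : HasDerivAt (fun s : ℝ => 2 * m * s) (2 * m) t := by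
    simpa using (hasDerivAt_id t).const_mul (2 * m)
  have hpow : E t ^ (-(1:ℝ)/2 - 1) = E t ^ (-(1:ℝ)/2) / E t := by
    rw [rpow_sub hEt, rpow_one]
  refine ((hlin.exp.const_mul c).mul (hE.rpow_const (Or.inl hEt.ne'))).congr_deriv ?_
  rw [hpow]
  field_simp
  ring

lemma deriv_log_eq_of_hasDerivAt_mul_self {f : ℝ → ℝ} {k t : ℝ}
    (hf : HasDerivAt f (k * f t) t) (hft : f t ≠ 0) :
    deriv (fun s => log (f s)) t = k := by
  rw [(hf.log hft).deriv]
  field_simp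

lemma lt_deriv_log_add_of_hasDerivAt_mul_self {f : ℝ → ℝ} {k a t : ℝ}
    (hf : HasDerivAt f (k * f t) t) (hft : 0 < f t) (ha : 0 < a) (hk : k < 0) :
    k < deriv (fun s => log (f s + a)) t := by
  have hpos : 0 < f t + a := by positivity
  rw [((hf.add_const a).log hpos.ne').deriv, lt_div_iff₀ hpos]
  nlinarith

theorem Ctilde_log_deriv_general (g : ℤ) (hg : 2 ≤ g) (b₀ C₀ : ℝ)
    (hb₀ : 0 < b₀)
    (Ccrit : ℝ) (hCcrit : Ccrit = ((g : ℝ) - 1) / (2 * π))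
    (hC₀ : Ccrit < C₀)
    (b : ℝ → ℝ)
    (hb : b = fun t =>
      ((1 / b₀ + 1 / (1 - (g : ℝ))) * exp (4 * (1 - (g : ℝ)) * t)
        - 1 / (1 - (g : ℝ)))⁻¹)
    (Ct : ℝ → ℝ)
    (hCt : Ct = fun t => (C₀ - Ccrit) * Real.sqrt b₀ * exp (2 * (1 - (g : ℝ)) * t)
      * ((1 / b₀ + 1 / (1 - (g : ℝ))) * exp (4 * (1 - (g : ℝ)) * t)
          - 1 / (1 - (g : ℝ))) ^ (-(1:ℝ)/2)) :
    (∀ t : ℝ, 0 ≤ t → deriv (fun s => Real.log (Ct s)) t = -2 * b t)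
    ∧ (∀ t : ℝ, 0 ≤ t → -2 * b t < deriv (fun s => Real.log (Ct s + Ccrit)) t) := by
  subst hb hCt
  have hg' : (2 : ℝ) ≤ g := by exact_mod_cast hg
  have hm : 1 - (g : ℝ) ≠ 0 := by linarith
  have hCcrit_pos : 0 < Ccrit := by rw [hCcrit]; exact div_pos (by linarith) (by positivity)
  have hc : 0 < (C₀ - Ccrit) * sqrt b₀ := mul_pos (by linarith) (sqrt_pos.2 hb₀)
  have hE (t : ℝ) (ht : 0 ≤ t) := add_div_mul_exp_sub_div_pos hb₀ (1 - (g : ℝ)) ht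
  have hODE (t : ℝ) (ht : 0 ≤ t) :=
    hasDerivAt_mul_exp_mul_rpow_neg_half ((C₀ - Ccrit) * sqrt b₀)
      (hasDerivAt_mul_exp_sub_div hm (1 / b₀ + 1 / (1 - (g : ℝ))) t) (hE t ht)
  refine ⟨fun t ht => deriv_log_eq_of_hasDerivAt_mul_self (hODE t ht) ?_,
    fun t ht => lt_deriv_log_add_of_hasDerivAt_mul_self (hODE t ht) ?_ hCcrit_pos ?_⟩
  · have := hE t ht; positivity
  · have := hE t ht; positivity
  · simpa using hE t ht

/-- C̃ satisfies (ln C̃)' = −2b, and C = C̃ + C_crit satisfies (ln C)' > −2b on [0,∞). -/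
theorem Ctilde_log_deriv (g : ℤ) (hg : 2 ≤ g) (b₀ C₀ : ℝ)
    (hb₀ : 0 < b₀) (hb₀' : b₀ < (g : ℝ) - 1)
    (Ccrit : ℝ) (hCcrit : Ccrit = ((g : ℝ) - 1) / (2 * π))
    (hC₀ : Ccrit < C₀)
    (b : ℝ → ℝ)
    (hb : b = fun t =>
      ((1 / b₀ + 1 / (1 - (g : ℝ))) * exp (4 * (1 - (g : ℝ)) * t)
        - 1 / (1 - (g : ℝ)))⁻¹)
    (Ct : ℝ → ℝ)
    (hCt : Ct = fun t => (C₀ - Ccrit) * Real.sqrt b₀ * exp (2 * (1 - (g : ℝ)) * t)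
      * ((1 / b₀ + 1 / (1 - (g : ℝ))) * exp (4 * (1 - (g : ℝ)) * t)
          - 1 / (1 - (g : ℝ))) ^ (-(1:ℝ)/2)) :
    (∀ t : ℝ, 0 ≤ t → deriv (fun s => Real.log (Ct s)) t = -2 * b t)
    ∧ (∀ t : ℝ, 0 ≤ t → -2 * b t < deriv (fun s => Real.log (Ct s + Ccrit)) t) :=
  Ctilde_log_deriv_general g hg b₀ C₀ hb₀ Ccrit hCcrit hC₀ b hb Ct hCt
end
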